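/- arXiv:1411.0218 — 4 statements merged into one kernel-verified Lean document; each statement's English description precedes it below -/
import Mathlib

section
/- Let V : ℝ → ℝ be C¹ and let (φ, y, ρ, H) be a solution of the coupled scalar field system on an interval I containing t₀ (without assuming the constraint). If 3H(t₀)² = (1/2)y(t₀)² + V(φ(t₀)) + ρ(t₀), then 3H(t)² = (1/2)y(t)² + V(φ(t)) + ρ(t) for every t ∈ I; i.e., the Friedmann constraint, once satisfied at an initial time, is preserved by the evolution equations. -/
open Real Filter Set Topology

/-
Along any solution the Friedmann defect `3H² - (y²/2 + V(φ) + ρ)` has derivative exactly zero: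
both `d(3H²)/dt` and `d(y²/2 + V(φ) + ρ)/dt` equal `-3Hy² - 3γHρ`, the coupling terms `α(φ)ρy`
and the potential terms `V'(φ)y` cancelling. A function with zero derivative on an interval is
constant there, so the defect stays zero once it vanishes at `t₀`.
-/

/-- The coupled scalar field system: `φ' = y`, `y' = -3Hy - V'(φ) + α(φ)ρ`,
`ρ' = -ρ(3γH + α(φ)y)`, `H' = -(1/2)y² - (γ/2)ρ` on the set `s`. -/
def ScalarFieldSystem (γ : ℝ) (V α φ y ρ H : ℝ → ℝ) (s : Set ℝ) : Prop :=
  ∀ t ∈ s,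
    HasDerivAt φ (y t) t ∧
    HasDerivAt y (-3 * H t * y t - deriv V (φ t) + α (φ t) * ρ t) t ∧
    HasDerivAt ρ (-(ρ t) * (3 * γ * H t + α (φ t) * y t)) t ∧
    HasDerivAt H (-(1/2) * (y t)^2 - (γ/2) * ρ t) t

theorem Convex.eq_of_hasDerivWithinAt_eq_zero {E : Type*} [NormedAddCommGroup E]
    [NormedSpace ℝ E] {f : ℝ → E} {s : Set ℝ} {x y : ℝ} (hs : Convex ℝ s)
    (hf : ∀ t ∈ s, HasDerivWithinAt f 0 s t) (hx : x ∈ s) (hy : y ∈ s) : f x = f y := by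
  have h := hs.norm_image_sub_le_of_norm_hasDerivWithin_le hf (fun _ _ => norm_zero.le) hx hy
  rw [zero_mul, norm_le_zero_iff, sub_eq_zero] at h
  exact h.symm

noncomputable def friedmannDefect (V φ y ρ H : ℝ → ℝ) (t : ℝ) : ℝ :=
  3 * H t ^ 2 - ((1/2) * y t ^ 2 + V (φ t) + ρ t)

theorem ScalarFieldSystem.hasDerivAt_friedmannDefect {γ : ℝ} {V α φ y ρ H : ℝ → ℝ} {s : Set ℝ}
    {t : ℝ} (hV : Differentiable ℝ V) (hsol : ScalarFieldSystem γ V α φ y ρ H s) (ht : t ∈ s) :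
    HasDerivAt (friedmannDefect V φ y ρ H) 0 t := by
  obtain ⟨hφ, hy, hρ, hH⟩ := hsol t ht
  have hVφ : HasDerivAt (fun u => V (φ u)) (deriv V (φ t) * y t) t :=
    (hV (φ t)).hasDerivAt.comp t hφ
  refine (((hH.pow 2).const_mul 3).sub
    (((hy.pow 2).const_mul (1/2)).add hVφ |>.add hρ)).congr_deriv ?_
  push_cast
  ring

/-- the Friedmann constraint `3H² = (1/2)y² + V(φ) + ρ`, once satisfied
at an initial time `t₀ ∈ I`, is preserved throughout the evolution on the interval `I`. -/
theorem constraint_preserved (γ t₀ : ℝ) (V α φ y ρ H : ℝ → ℝ) (I : Set ℝ)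
    (hI : I.OrdConnected) (ht₀ : t₀ ∈ I)
    (hV : ContDiff ℝ 1 V)
    (hsol : ScalarFieldSystem γ V α φ y ρ H I)
    (hcon₀ : 3 * (H t₀)^2 = (1/2) * (y t₀)^2 + V (φ t₀) + ρ t₀) :
    ∀ t ∈ I, 3 * (H t)^2 = (1/2) * (y t)^2 + V (φ t) + ρ t := by
  intro t ht
  have hconst : friedmannDefect V φ y ρ H t = friedmannDefect V φ y ρ H t₀ :=
    hI.convex.eq_of_hasDerivWithinAt_eq_zero (fun u hu =>
      (hsol.hasDerivAt_friedmannDefect (hV.differentiable one_ne_zero) hu).hasDerivWithinAt) ht ht₀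
  unfold friedmannDefect at hconst
  linarith
end

section
/- Let 0 ≤ γ ≤ 2 and let (φ, y, ρ, H) be a solution of the coupled scalar field system on [0, ∞) with ρ ≥ 0, and suppose |H(t)| < K for all t ≥ 0, where K > 0. Then for all t ≥ 0, ∫₀ᵗ (1/2) y(s)² ds ≤ 2K and ∫₀ᵗ (γ/2) ρ(s) ds ≤ 2K. -/
open Real Filter Set Topology MeasureTheory

/-- if `ρ ≥ 0` and `|H(t)| < K` for all `t ≥ 0`, then
`∫₀ᵗ (1/2) y(s)² ds ≤ 2K` and `∫₀ᵗ (γ/2) ρ(s) ds ≤ 2K` for all `t ≥ 0`. -/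
theorem integral_bounds (γ K : ℝ) (V α φ y ρ H : ℝ → ℝ)
    (hγ0 : 0 ≤ γ) (hγ2 : γ ≤ 2) (hK : 0 < K)
    (hsol : ScalarFieldSystem γ V α φ y ρ H (Ici 0))
    (hρ : ∀ t, 0 ≤ t → 0 ≤ ρ t)
    (hH : ∀ t, 0 ≤ t → |H t| < K) :
    ∀ t, 0 ≤ t →
      (∫ s in (0:ℝ)..t, (1/2) * (y s)^2) ≤ 2 * K ∧
      (∫ s in (0:ℝ)..t, (γ/2) * ρ s) ≤ 2 * K := by
  intro t ht
  have hy_cont : ContinuousOn y (Ici 0) := fun s hs =>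
    ((hsol s hs).2.1).continuousAt.continuousWithinAt
  have hρ_cont : ContinuousOn ρ (Ici 0) := fun s hs =>
    ((hsol s hs).2.2.1).continuousAt.continuousWithinAt
  have hsub : Icc (0:ℝ) t ⊆ Ici 0 := fun s hs => hs.1
  have hcont1 : ContinuousOn (fun s => (1/2) * (y s)^2) (Icc 0 t) :=
    continuousOn_const.mul ((hy_cont.mono hsub).pow 2)
  have hcont2 : ContinuousOn (fun s => (γ/2) * ρ s) (Icc 0 t) :=
    continuousOn_const.mul (hρ_cont.mono hsub)
  have hint1 : IntervalIntegrable (fun s => (1/2) * (y s)^2) volume 0 t :=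
    hcont1.intervalIntegrable_of_Icc ht
  have hint2 : IntervalIntegrable (fun s => (γ/2) * ρ s) volume 0 t :=
    hcont2.intervalIntegrable_of_Icc ht
  have hintf : IntervalIntegrable (fun s => (1/2) * (y s)^2 + (γ/2) * ρ s) volume 0 t :=
    hint1.add hint2
  have huIcc : uIcc (0:ℝ) t = Icc 0 t := uIcc_of_le ht
  have hderiv : ∀ s ∈ uIcc (0:ℝ) t,
      HasDerivAt H (-((1/2) * (y s)^2 + (γ/2) * ρ s)) s := by
    intro s hs
    rw [huIcc] at hs
    have := (hsol s hs.1).2.2.2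
    convert this using 1
    ring
  have heq : ∫ s in (0:ℝ)..t, -((1/2) * (y s)^2 + (γ/2) * ρ s) = H t - H 0 :=
    intervalIntegral.integral_eq_sub_of_hasDerivAt hderiv hintf.neg
  rw [intervalIntegral.integral_neg] at heq
  have hfint : ∫ s in (0:ℝ)..t, ((1/2) * (y s)^2 + (γ/2) * ρ s) = H 0 - H t := by
    linarith
  have h0 := abs_lt.mp (hH 0 le_rfl)
  have h1 := abs_lt.mp (hH t ht)
  have hbound : (∫ s in (0:ℝ)..t, ((1/2) * (y s)^2 + (γ/2) * ρ s)) ≤ 2 * K := by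
    rw [hfint]; linarith
  have hle1 : (∫ s in (0:ℝ)..t, (1/2) * (y s)^2)
      ≤ ∫ s in (0:ℝ)..t, ((1/2) * (y s)^2 + (γ/2) * ρ s) := by
    apply intervalIntegral.integral_mono_on ht hint1 hintf
    intro s hs
    have := hρ s hs.1
    nlinarith
  have hle2 : (∫ s in (0:ℝ)..t, (γ/2) * ρ s)
      ≤ ∫ s in (0:ℝ)..t, ((1/2) * (y s)^2 + (γ/2) * ρ s) := by
    apply intervalIntegral.integral_mono_on ht hint2 hintf
    intro s hs
    nlinarith [sq_nonneg (y s)]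
  exact ⟨le_trans hle1 hbound, le_trans hle2 hbound⟩
end

section
/- Let 0 < γ ≤ 2, let V : ℝ → ℝ be C¹ and bounded above by a constant V_max > 0, and let (φ, y, ρ, H) be a solution of the coupled scalar field system on its maximal interval of existence to the right of t₀, with ρ ≥ 0 and satisfying the constraint. If H is not bounded below on the interval of existence, then H diverges to −∞ in finite time: there exists a finite t* > t₀ such that H(t) → −∞ as t → t*⁻. -/
open Real Filter Set Topology

/-- let `0 < γ ≤ 2`, `V` be `C¹` and bounded above by `V_max > 0`, and
let `(φ, y, ρ, H)` solve the system with `ρ ≥ 0` and the constraint on its maximal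
interval of existence `[t₀, T)` (maximality: no extension solving the system and the
constraint exists on a strictly larger interval). If `H` is not bounded below on the
interval of existence, then `H` diverges to `−∞` in finite time: there is a finite
`t* > t₀` (with `t* ≤ T`) such that `H(t) → −∞` as `t → t*⁻`. -/
theorem H_unbounded_implies_finite_time_blowup
    (γ t₀ Vmax : ℝ) (T : EReal) (V α φ y ρ H : ℝ → ℝ)
    (hγ0 : 0 < γ) (hγ2 : γ ≤ 2)
    (hV : ContDiff ℝ 1 V)
    (hVmax : 0 < Vmax) (hVbdd : ∀ x, V x ≤ Vmax)
    (hdom : (t₀ : EReal) < T)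
    (hsol : ScalarFieldSystem γ V α φ y ρ H {t : ℝ | t₀ ≤ t ∧ (t : EReal) < T})
    (hρ : ∀ t : ℝ, t₀ ≤ t → (t : EReal) < T → 0 ≤ ρ t)
    (hcon : ∀ t : ℝ, t₀ ≤ t → (t : EReal) < T →
      3 * (H t)^2 = (1/2) * (y t)^2 + V (φ t) + ρ t)
    (hmaximal : ∀ T' : EReal, T < T' →
      ¬ ∃ φ' y' ρ' H' : ℝ → ℝ,
        ScalarFieldSystem γ V α φ' y' ρ' H' {t : ℝ | t₀ ≤ t ∧ (t : EReal) < T'} ∧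
        (∀ t : ℝ, t₀ ≤ t → (t : EReal) < T' →
          3 * (H' t)^2 = (1/2) * (y' t)^2 + V (φ' t) + ρ' t) ∧
        (∀ t : ℝ, t₀ ≤ t → (t : EReal) < T →
          φ' t = φ t ∧ y' t = y t ∧ ρ' t = ρ t ∧ H' t = H t))
    (hHunbdd : ¬ ∃ B : ℝ, ∀ t : ℝ, t₀ ≤ t → (t : EReal) < T → B ≤ H t) :
    ∃ tstar : ℝ, t₀ < tstar ∧ (tstar : EReal) ≤ T ∧
      Tendsto H (𝓝[<] tstar) atBot := by
  push_neg at hHunbdd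
  induction T using EReal.rec with
  | bot => exact absurd hdom (by simp)
  | coe Tr =>
    rw [EReal.coe_lt_coe_iff] at hdom
    refine ⟨Tr, hdom, le_refl _, ?_⟩
    have hant : AntitoneOn H (Ico t₀ Tr) := by
      apply antitoneOn_of_deriv_nonpos (convex_Ico t₀ Tr)
      · intro t ht
        exact ((hsol t ⟨ht.1, EReal.coe_lt_coe_iff.2 ht.2⟩).2.2.2).continuousAt.continuousWithinAt
      · intro t ht
        rw [interior_Ico] at ht
        exact ((hsol t ⟨ht.1.le, EReal.coe_lt_coe_iff.2 ht.2⟩).2.2.2).differentiableAt.differentiableWithinAt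
      · intro t ht
        rw [interior_Ico] at ht
        have hd := (hsol t ⟨ht.1.le, EReal.coe_lt_coe_iff.2 ht.2⟩).2.2.2
        rw [hd.deriv]
        have hr := hρ t ht.1.le (EReal.coe_lt_coe_iff.2 ht.2)
        nlinarith [sq_nonneg (y t)]
    rw [tendsto_atBot]
    intro B
    obtain ⟨t₁, ht₁0, ht₁T, hH1⟩ := hHunbdd B
    rw [EReal.coe_lt_coe_iff] at ht₁T
    filter_upwards [Ioo_mem_nhdsLT_of_mem (right_mem_Ioc.2 ht₁T : Tr ∈ Ioc t₁ Tr)] with t ht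
    exact le_of_lt (lt_of_le_of_lt (hant ⟨ht₁0, ht₁T⟩ ⟨ht₁0.trans ht.1.le, ht.2⟩ ht.1.le) hH1)
  | top =>
    exfalso
    have hmem : ∀ t : ℝ, t₀ ≤ t → t ∈ {t : ℝ | t₀ ≤ t ∧ (t : EReal) < ⊤} := fun t ht =>
      ⟨ht, EReal.coe_lt_top t⟩
    have hant : AntitoneOn H (Ici t₀) := by
      apply antitoneOn_of_deriv_nonpos (convex_Ici t₀)
      · intro t ht
        exact ((hsol t (hmem t ht)).2.2.2).continuousAt.continuousWithinAt
      · intro t ht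
        rw [interior_Ici] at ht
        exact ((hsol t (hmem t ht.le)).2.2.2).differentiableAt.differentiableWithinAt
      · intro t ht
        rw [interior_Ici] at ht
        have hd := (hsol t (hmem t ht.le)).2.2.2
        rw [hd.deriv]
        have hr := hρ t ht.le (EReal.coe_lt_top t)
        nlinarith [sq_nonneg (y t)]
    obtain ⟨t₁, ht₁0, -, hH1⟩ := hHunbdd (-(Real.sqrt Vmax + 1))
    -- on Ici t₁, H t ≤ H t₁ < -(√Vmax+1) < 0 and (H t)^2 > Vmax
    have hHneg : ∀ t, t₁ ≤ t → H t < -(Real.sqrt Vmax + 1) :=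
      fun t ht => lt_of_le_of_lt (hant (mem_Ici.2 ht₁0) (mem_Ici.2 (ht₁0.trans ht)) ht) hH1
    have hsq : ∀ t, t₁ ≤ t → Vmax < (H t)^2 := by
      intro t ht
      have h1 := hHneg t ht
      have h2 : 0 ≤ Real.sqrt Vmax := Real.sqrt_nonneg _
      have h3 : Real.sqrt Vmax ^ 2 = Vmax := Real.sq_sqrt hVmax.le
      nlinarith
    have hHlt0 : ∀ t, t₁ ≤ t → H t < 0 := by
      intro t ht
      have h2 := Real.sqrt_nonneg Vmax
      linarith [hHneg t ht]
    -- Riccati bound: H' ≤ -γ H² on Ici t₁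
    have hric : ∀ t, t₁ ≤ t → -(1/2) * (y t)^2 - (γ/2) * ρ t ≤ -γ * (H t)^2 := by
      intro t ht
      have hc := hcon t (ht₁0.trans ht) (EReal.coe_lt_top t)
      have hr := hρ t (ht₁0.trans ht) (EReal.coe_lt_top t)
      have hv := hVbdd (φ t)
      have hq := hsq t ht
      nlinarith [sq_nonneg (y t), mul_nonneg hγ0.le hr, mul_nonneg hγ0.le (sq_nonneg (y t))]
    -- F t = (H t)⁻¹ - γ t is monotone on Ici t₁
    set F : ℝ → ℝ := fun t => (H t)⁻¹ - γ * t with hF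
    have hFder : ∀ t, t₁ ≤ t → HasDerivAt F
        (-(-(1/2) * (y t)^2 - (γ/2) * ρ t) / (H t)^2 - γ) t := by
      intro t ht
      have hd := (hsol t (hmem t (ht₁0.trans ht))).2.2.2
      exact (hd.inv (hHlt0 t ht).ne).sub ((hasDerivAt_id t).const_mul γ |>.congr_deriv (mul_one γ))
    have hFmono : MonotoneOn F (Ici t₁) := by
      apply monotoneOn_of_deriv_nonneg (convex_Ici t₁)
      · intro t ht
        exact (hFder t ht).continuousAt.continuousWithinAt
      · intro t ht
        rw [interior_Ici] at ht
        exact (hFder t ht.le).differentiableAt.differentiableWithinAt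
      · intro t ht
        rw [interior_Ici] at ht
        rw [(hFder t ht.le).deriv]
        have h1 := hric t ht.le
        have h2 : (0:ℝ) < (H t)^2 := by nlinarith [hHlt0 t ht.le]
        have h3 : γ * (H t)^2 ≤ -(-(1/2) * (y t)^2 - (γ/2) * ρ t) := by linarith
        rw [sub_nonneg, le_div_iff₀ h2]
        linarith
    -- contradiction at t₂
    have hinv1 : (H t₁)⁻¹ < 0 := inv_neg''.2 (hHlt0 t₁ le_rfl)
    set d : ℝ := (1 - (H t₁)⁻¹)/γ with hd
    have hdpos : 0 < d := div_pos (by linarith) hγ0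
    have ht₁₂ : t₁ ≤ t₁ + d := by linarith
    have hmono := hFmono (self_mem_Ici) (mem_Ici.2 ht₁₂) ht₁₂
    have hinv2 : (H (t₁ + d))⁻¹ < 0 := inv_neg''.2 (hHlt0 (t₁ + d) ht₁₂)
    have hγd : γ * d = 1 - (H t₁)⁻¹ := by
      rw [hd]; field_simp
    simp only [hF] at hmono
    nlinarith [hmono]
end

section
/- Let 0 ≤ γ ≤ 2 and let V : ℝ → ℝ be a C¹ potential whose unique critical point is φ_m > 0 with V(φ_m) > 0. Let (φ, y, ρ, H) be a solution of the coupled scalar field system on [t₀, ∞) satisfying the constraint, such that y(t) = 0 and ρ(t) = 0 for all t ≥ t₀. Then φ(t) = φ_m for all t ≥ t₀, and H is constant, equal to √(V(φ_m)/3) or −√(V(φ_m)/3); i.e., the largest invariant set contained in {y = 0, ρ = 0} consists exactly of the two equilibria q±. -/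
open Real Filter Set Topology

/-- a solution satisfying the constraint with `y ≡ 0` and `ρ ≡ 0` on
`[t₀, ∞)` must sit at an equilibrium: `φ(t) = φ_m` for all `t ≥ t₀` and `H` is
constantly `√(V(φ_m)/3)` or constantly `−√(V(φ_m)/3)`; i.e., the largest invariant
set contained in `{y = 0, ρ = 0}` consists exactly of the two equilibria `q±`. -/
theorem invariant_set_in_E (γ t₀ φm : ℝ) (V α φ y ρ H : ℝ → ℝ)
    (hγ0 : 0 ≤ γ) (hγ2 : γ ≤ 2)
    (hV : ContDiff ℝ 1 V)
    (hφm : 0 < φm) (hVφm : 0 < V φm)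
    (hcrit : ∀ x, deriv V x = 0 ↔ x = φm)
    (hsol : ScalarFieldSystem γ V α φ y ρ H (Ici t₀))
    (hcon : ∀ t, t₀ ≤ t → 3 * (H t)^2 = (1/2) * (y t)^2 + V (φ t) + ρ t)
    (hy : ∀ t, t₀ ≤ t → y t = 0)
    (hρ : ∀ t, t₀ ≤ t → ρ t = 0) :
    (∀ t, t₀ ≤ t → φ t = φm) ∧
    ((∀ t, t₀ ≤ t → H t = Real.sqrt (V φm / 3)) ∨
     (∀ t, t₀ ≤ t → H t = -Real.sqrt (V φm / 3))) := by
  -- Step 1: φ t = φm for t > t₀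
  have hφint : ∀ t, t₀ < t → φ t = φm := by
    intro t ht
    have hmem : Ici t₀ ∈ 𝓝 t := Ici_mem_nhds ht
    have hy0 : y =ᶠ[𝓝 t] (fun _ => 0) :=
      Filter.eventually_of_mem hmem (fun s hs => hy s hs)
    have h0 : HasDerivAt y 0 t := (hasDerivAt_const t 0).congr_of_eventuallyEq hy0
    have hD := (hsol t (le_of_lt ht)).2.1
    have := h0.unique hD
    rw [hy t (le_of_lt ht), hρ t (le_of_lt ht)] at this
    have : deriv V (φ t) = 0 := by linarith
    exact (hcrit (φ t)).mp this
  -- Step 2: φ t₀ = φm by continuity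
  have hφ : ∀ t, t₀ ≤ t → φ t = φm := by
    intro t ht
    rcases eq_or_lt_of_le ht with heq | h
    · subst heq
      have hc : ContinuousAt φ t₀ := (hsol t₀ Set.self_mem_Ici).1.continuousAt
      have h1 : Tendsto φ (𝓝[>] t₀) (𝓝 (φ t₀)) :=
        hc.continuousWithinAt.tendsto
      have h2 : Tendsto φ (𝓝[>] t₀) (𝓝 φm) := by
        apply Tendsto.congr' _ tendsto_const_nhds
        filter_upwards [self_mem_nhdsWithin] with s hs
        exact (hφint s hs).symm
      exact tendsto_nhds_unique h1 h2
    · exact hφint t h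
  refine ⟨hφ, ?_⟩
  -- Step 3: H is constant on [t₀,∞)
  have hHder : ∀ t, t₀ ≤ t → HasDerivAt H 0 t := by
    intro t ht
    have h := (hsol t ht).2.2.2
    rw [hy t ht, hρ t ht] at h
    simpa using h
  have hHconst : ∀ t, t₀ ≤ t → H t = H t₀ := by
    intro t ht
    have := constant_of_has_deriv_right_zero
      (f := H) (a := t₀) (b := t)
      (fun s hs => ((hHder s hs.1).differentiableAt).continuousAt.continuousWithinAt)
      (fun s hs => (hHder s hs.1).hasDerivWithinAt)
    exact this t ⟨ht, le_rfl⟩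
  -- constraint at t₀
  have hsq : (H t₀)^2 = V φm / 3 := by
    have := hcon t₀ le_rfl
    rw [hy t₀ le_rfl, hρ t₀ le_rfl, hφ t₀ le_rfl] at this
    linarith
  have hs : Real.sqrt (V φm / 3) ^ 2 = V φm / 3 :=
    Real.sq_sqrt (by positivity)
  have : H t₀ = Real.sqrt (V φm / 3) ∨ H t₀ = -Real.sqrt (V φm / 3) := by
    have : (H t₀)^2 = (Real.sqrt (V φm / 3))^2 := by rw [hsq, hs]
    rcases sq_eq_sq_iff_eq_or_eq_neg.mp this with h | h
    · exact Or.inl h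
    · exact Or.inr h
  rcases this with h | h
  · exact Or.inl (fun t ht => (hHconst t ht).trans h)
  · exact Or.inr (fun t ht => (hHconst t ht).trans h)
end
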